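/- Suppose a choice correspondence c over finite nonempty sets of income distributions admits an FSPU representation. Then the following are equivalent: (1) c satisfies WARP over 𝒜; (2) c satisfies Quasi-linearity over 𝒜; (3) c admits a quasi-linear utility representation; (4) c admits a utility representation. -/
import Mathlib


noncomputable section

/-- Income distributions `(x,y) ∈ [w,∞) × [w,∞)`. -/
abbrev SAlt (w : ℝ) : Type := {z : ℝ × ℝ // w ≤ z.1 ∧ w ≤ z.2}

/-- The Gini coefficient of a two-person income distribution. -/
def Gini (z : ℝ × ℝ) : ℝ := (|z.1 - z.2| + |z.2 - z.1|) / (4 * (z.1 + z.2))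

variable {w : ℝ}

/-- `c` satisfies WARP over a collection `S` of choice problems. -/
def WARPover (c : Finset (SAlt w) → Finset (SAlt w))
    (S : Set (Finset (SAlt w))) : Prop :=
  ∀ A ∈ S, ∀ B ∈ S, B ⊆ A → (c A ∩ B).Nonempty → c A ∩ B = c B

/-- `c` satisfies Quasi-linearity over a collection `S` of choice problems. -/
def QLOver (c : Finset (SAlt w) → Finset (SAlt w))
    (S : Set (Finset (SAlt w))) : Prop :=
  ∀ A ∈ S, ∀ B ∈ S, ∀ a : ℝ, a ≠ 0 →
    ∀ z z' za z'a : SAlt w,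
      za.1.1 = z.1.1 + a → za.1.2 = z.1.2 →
      z'a.1.1 = z'.1.1 + a → z'a.1.2 = z'.1.2 →
      z ∈ c A → z' ∈ A → z'a ∈ c B → za ∈ B → za ∈ c B

/-- The set of most balanced income distributions in `A`. -/
def PsiS (A : Finset (SAlt w)) : Set (SAlt w) :=
  {z : SAlt w | z ∈ A ∧ ∀ z' ∈ A, Gini z.1 ≤ Gini z'.1}

/-- Equality Reference Dependence: WARP and Quasi-linearity hold among subsets
preserving a most balanced income distribution. -/
def EqRefDep (c : Finset (SAlt w) → Finset (SAlt w)) : Prop :=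
  ∀ A : Finset (SAlt w), A.Nonempty → ∀ z ∈ PsiS A,
    WARPover c {B : Finset (SAlt w) | B ⊆ A ∧ z ∈ B} ∧
    QLOver c {B : Finset (SAlt w) | B ⊆ A ∧ z ∈ B}

/-- Fairness: enlarging a choice problem never shifts choice from sharing more to
sharing less. -/
def Fairness (c : Finset (SAlt w) → Finset (SAlt w)) : Prop :=
  ∀ A B : Finset (SAlt w), A.Nonempty → B.Nonempty → A ⊆ B →
    ∀ z ∈ A, ∀ z' ∈ A, z'.1.2 < z.1.2 →
      z ∈ c A → z' ∉ c A → z' ∉ c B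

/-- Monotonicity: strictly dominating income distributions are chosen. -/
def SMono (c : Finset (SAlt w) → Finset (SAlt w)) : Prop :=
  ∀ z z' : SAlt w, z'.1.1 ≤ z.1.1 → z'.1.2 ≤ z.1.2 → z ≠ z' →
    c {z, z'} = {z}

/-- Continuity: `c` has a closed graph w.r.t. the Hausdorff distance. -/
def ClosedGraphC (c : Finset (SAlt w) → Finset (SAlt w)) : Prop :=
  ∀ (x : SAlt w) (xs : ℕ → SAlt w) (A : Finset (SAlt w)) (As : ℕ → Finset (SAlt w)),
    A.Nonempty → (∀ n, (As n).Nonempty) →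
    Filter.Tendsto xs Filter.atTop (nhds x) →
    Filter.Tendsto
      (fun n => Metric.hausdorffDist ((As n : Set (SAlt w))) (A : Set (SAlt w)))
      Filter.atTop (nhds 0) →
    (∀ n, xs n ∈ c (As n)) → x ∈ c A

/-- `c` admits an FSPU representation with data `(v, r)`. -/
def IsFSPU (w : ℝ) (c : Finset (SAlt w) → Finset (SAlt w))
    (v : ℝ → ℝ → ℝ) (r : Finset (SAlt w) → ℝ) : Prop :=
  (∀ ρ : ℝ, ρ ∈ Set.Ico (0 : ℝ) (1 / 2) → StrictMonoOn (v ρ) (Set.Ici w)) ∧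
  (∀ ρ ρ' : ℝ, 0 ≤ ρ → ρ < ρ' → ρ' < 1 / 2 →
    ∀ y y' : ℝ, w ≤ y' → y' < y → v ρ' y - v ρ' y' ≤ v ρ y - v ρ y') ∧
  (∀ A : Finset (SAlt w), A.Nonempty →
    (∃ z ∈ A, Gini z.1 = r A) ∧ ∀ z ∈ A, r A ≤ Gini z.1) ∧
  (∀ A : Finset (SAlt w), A.Nonempty → ∀ z : SAlt w,
    z ∈ c A ↔ z ∈ A ∧ ∀ z' ∈ A,
      z'.1.1 + v (r A) z'.1.2 ≤ z.1.1 + v (r A) z.1.2) ∧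
  ClosedGraphC c

/-- The perfectly equal distribution `(w,w)`: an auxiliary reference point. -/
def dpt (w : ℝ) : SAlt w := ⟨(w, w), le_refl w, le_refl w⟩

/-- Shift the decision maker's income up by 1. -/
def shft {w : ℝ} (u : SAlt w) : SAlt w :=
  ⟨(u.1.1 + 1, u.1.2), ⟨by have := u.2.1; dsimp; linarith, u.2.2⟩⟩

/-- Proposition 4: given an FSPU representation, WARP,
Quasi-linearity, quasi-linear utility representation, and utility representation are
all equivalent. -/
theorem stmt9 (w : ℝ) (hw : 0 < w)
    (c : Finset (SAlt w) → Finset (SAlt w))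
    (hc : ∀ A : Finset (SAlt w), A.Nonempty → c A ⊆ A ∧ (c A).Nonempty)
    (v : ℝ → ℝ → ℝ) (r : Finset (SAlt w) → ℝ)
    (hrep : IsFSPU w c v r) :
    List.TFAE
      [WARPover c {A : Finset (SAlt w) | A.Nonempty},
       QLOver c {A : Finset (SAlt w) | A.Nonempty},
       ∃ v0 : ℝ → ℝ, StrictMonoOn v0 (Set.Ici w) ∧
         ∀ A : Finset (SAlt w), A.Nonempty → ∀ z : SAlt w,
           z ∈ c A ↔ z ∈ A ∧ ∀ z' ∈ A, z'.1.1 + v0 z'.1.2 ≤ z.1.1 + v0 z.1.2,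
       ∃ U : SAlt w → ℝ, ∀ A : Finset (SAlt w), A.Nonempty → ∀ z : SAlt w,
         z ∈ c A ↔ z ∈ A ∧ ∀ z' ∈ A, U z' ≤ U z] := by
  classical
  obtain ⟨hmono, hconc, hr, hch, hcg⟩ := hrep
  have hGd : Gini (dpt w).1 = 0 := by simp [Gini, dpt]
  have hGnn : ∀ z : SAlt w, 0 ≤ Gini z.1 := by
    intro z
    have h1 : (0:ℝ) < 4 * (z.1.1 + z.1.2) := by nlinarith [z.2.1, z.2.2]
    exact div_nonneg (by positivity) h1.le
  have hm0 : StrictMonoOn (v 0) (Set.Ici w) := hmono 0 ⟨le_refl 0, by norm_num⟩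
  have hdle : ∀ z : SAlt w, (dpt w).1.1 + v 0 (dpt w).1.2 ≤ z.1.1 + v 0 z.1.2 := by
    intro z
    have h1 : v 0 w ≤ v 0 z.1.2 := by
      rcases eq_or_lt_of_le z.2.2 with h | h
      · exact le_of_eq (congrArg (v 0) h)
      · exact (hm0 Set.self_mem_Ici (le_of_lt h) h).le
    have h2 : w ≤ z.1.1 := z.2.1
    show w + v 0 w ≤ z.1.1 + v 0 z.1.2
    linarith
  -- the reference of any menu containing the diagonal point is 0
  have hrzero : ∀ B : Finset (SAlt w), r (insert (dpt w) B) = 0 := by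
    intro B
    have hne : (insert (dpt w) B).Nonempty := ⟨dpt w, Finset.mem_insert_self _ _⟩
    obtain ⟨⟨z₀, hz₀, hz₀e⟩, hlb⟩ := hr _ hne
    have h1 := hlb (dpt w) (Finset.mem_insert_self _ _)
    rw [hGd] at h1
    have h2 : 0 ≤ r (insert (dpt w) B) := hz₀e ▸ hGnn z₀
    linarith
  have hchar : ∀ (B : Finset (SAlt w)) (z : SAlt w),
      z ∈ c (insert (dpt w) B) ↔ z ∈ insert (dpt w) B ∧ ∀ z' ∈ insert (dpt w) B,
        z'.1.1 + v 0 z'.1.2 ≤ z.1.1 + v 0 z.1.2 := by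
    intro B z
    have h := hch (insert (dpt w) B) ⟨dpt w, Finset.mem_insert_self _ _⟩ z
    rwa [hrzero B] at h
  tfae_have 1 → 3
  | h1 => by
    refine ⟨v 0, hm0, ?_⟩
    intro B hB z
    obtain ⟨zm, hzmB, hzm⟩ := Finset.exists_max_image B (fun u => u.1.1 + v 0 u.1.2) hB
    have hAle : ∀ z' ∈ insert (dpt w) B, z'.1.1 + v 0 z'.1.2 ≤ zm.1.1 + v 0 zm.1.2 := by
      intro z' hz'
      rcases Finset.mem_insert.1 hz' with h | h
      · rw [h]; exact hdle zm
      · exact hzm z' h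
    have hzmc : zm ∈ c (insert (dpt w) B) :=
      (hchar B zm).2 ⟨Finset.mem_insert_of_mem hzmB, hAle⟩
    have hwarp := h1 (insert (dpt w) B) ⟨dpt w, Finset.mem_insert_self _ _⟩ B hB
      (Finset.subset_insert _ _) ⟨zm, Finset.mem_inter.2 ⟨hzmc, hzmB⟩⟩
    constructor
    · intro hz
      have hz2 : z ∈ c (insert (dpt w) B) ∩ B := hwarp ▸ hz
      rw [Finset.mem_inter] at hz2
      refine ⟨hz2.2, fun z' hz' => ((hchar B z).1 hz2.1).2 z' (Finset.mem_insert_of_mem hz')⟩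
    · rintro ⟨hzB, hmax⟩
      have hzc : z ∈ c (insert (dpt w) B) := by
        refine (hchar B z).2 ⟨Finset.mem_insert_of_mem hzB, ?_⟩
        intro z' hz'
        rcases Finset.mem_insert.1 hz' with h | h
        · rw [h]; exact hdle z
        · exact hmax z' h
      rw [← hwarp]
      exact Finset.mem_inter.2 ⟨hzc, hzB⟩
  tfae_have 2 → 3
  | h2 => by
    refine ⟨v 0, hm0, ?_⟩
    have hfwd : ∀ B : Finset (SAlt w), B.Nonempty → ∀ z ∈ c B, ∀ z' ∈ B,
        z'.1.1 + v 0 z'.1.2 ≤ z.1.1 + v 0 z.1.2 := by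
      intro B hB z hz z' hz'
      by_contra hlt
      push_neg at hlt
      set B' : Finset (SAlt w) := insert (dpt w) {shft z, shft z'} with hB'
      have hz'1mem : shft z' ∈ B' := Finset.mem_insert_of_mem (by simp)
      have hz1mem : shft z ∈ B' := Finset.mem_insert_of_mem (by simp)
      have hz'1c : shft z' ∈ c B' := by
        refine (hchar _ (shft z')).2 ⟨hz'1mem, ?_⟩
        intro u hu
        rcases Finset.mem_insert.1 hu with h | h
        · rw [h]; exact hdle (shft z')
        · rcases Finset.mem_insert.1 h with h' | h'
          · rw [h']
            show z.1.1 + 1 + v 0 z.1.2 ≤ z'.1.1 + 1 + v 0 z'.1.2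
            linarith
          · rw [Finset.mem_singleton.1 h']
      have hQL := h2 B hB B' ⟨dpt w, Finset.mem_insert_self _ _⟩ 1 one_ne_zero
        z z' (shft z) (shft z') rfl rfl rfl rfl hz hz' hz'1c hz1mem
      have := ((hchar _ (shft z)).1 hQL).2 (shft z') hz'1mem
      have h' : z'.1.1 + 1 + v 0 z'.1.2 ≤ z.1.1 + 1 + v 0 z.1.2 := this
      linarith
    intro B hB z
    constructor
    · intro hz
      exact ⟨(hc B hB).1 hz, hfwd B hB z hz⟩
    · rintro ⟨hzB, hmax⟩
      obtain ⟨z₀, hz₀⟩ := (hc B hB).2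
      have hz₀B : z₀ ∈ B := (hc B hB).1 hz₀
      have heq : z₀.1.1 + v 0 z₀.1.2 = z.1.1 + v 0 z.1.2 :=
        le_antisymm (hmax z₀ hz₀B) (hfwd B hB z₀ hz₀ z hzB)
      set B' : Finset (SAlt w) := insert (dpt w) {shft z, shft z₀} with hB'
      have hz₀1mem : shft z₀ ∈ B' := Finset.mem_insert_of_mem (by simp)
      have hz1c : shft z ∈ c B' := by
        refine (hchar _ (shft z)).2 ⟨Finset.mem_insert_of_mem (by simp), ?_⟩
        intro u hu
        rcases Finset.mem_insert.1 hu with h | h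
        · rw [h]; exact hdle (shft z)
        · rcases Finset.mem_insert.1 h with h' | h'
          · rw [h']
          · rw [Finset.mem_singleton.1 h']
            show z₀.1.1 + 1 + v 0 z₀.1.2 ≤ z.1.1 + 1 + v 0 z.1.2
            linarith
      exact h2 B' ⟨dpt w, Finset.mem_insert_self _ _⟩ B hB (-1) (by norm_num)
        (shft z) (shft z₀) z z₀ (by show z.1.1 = z.1.1 + 1 + (-1); ring) rfl
        (by show z₀.1.1 = z₀.1.1 + 1 + (-1); ring) rfl hz1c hz₀1mem hz₀ hzB
  tfae_have 3 → 2
  | ⟨v0, hv0, h3⟩ => by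
    intro A hA B hB a ha z z' za z'a e1 e2 e3 e4 hzc hz'A hz'ac hzaB
    refine (h3 B hB za).2 ⟨hzaB, ?_⟩
    intro u hu
    have h1 := ((h3 A hA z).1 hzc).2 z' hz'A
    have h2 := ((h3 B hB z'a).1 hz'ac).2 u hu
    rw [e3, e4] at h2
    rw [e1, e2]
    linarith
  tfae_have 3 → 4
  | ⟨v0, hv0, h3⟩ => ⟨fun z => z.1.1 + v0 z.1.2, h3⟩
  tfae_have 4 → 1
  | ⟨U, hU⟩ => by
    intro A hA B hB hBA hne
    obtain ⟨z₀, hz₀⟩ := hne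
    rw [Finset.mem_inter] at hz₀
    ext z
    rw [Finset.mem_inter]
    constructor
    · rintro ⟨hzA, hzB⟩
      exact (hU B hB z).2 ⟨hzB, fun z' hz' => ((hU A hA z).1 hzA).2 z' (hBA hz')⟩
    · intro hz
      obtain ⟨hzB, hzmax⟩ := (hU B hB z).1 hz
      refine ⟨?_, hzB⟩
      refine (hU A hA z).2 ⟨hBA hzB, ?_⟩
      intro z' hz'
      have h1 := ((hU A hA z₀).1 hz₀.1).2 z' hz'
      have h2 := hzmax z₀ hz₀.2
      linarith
  tfae_finish

end
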